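/- Let f : R^d → R be a continuous function of compact support and suppose that for an infinite set Ξ ⊆ S^{d-1} of directions, the X-ray transform of f vanishes: ∫_{-∞}^{∞} f(x + τξ) dτ = 0 for all ξ ∈ Ξ and all x ∈ ξ^⊥. Then f ≡ 0. -/

import Mathlib

/-!
If the X-ray transform of `f` in direction `ξ` vanishes, then by Fubini `∫ f g = 0` for every
continuous `g` constant along `ξ`, in particular for `g y = (y ⬝ᵥ η) ^ k` whenever `η ⊥ ξ`.
The moment `η ↦ ∫ f y * (y ⬝ᵥ η) ^ k` is a polynomial of degree `k` vanishing on the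
hyperplanes `ξᗮ`, `ξ ∈ Ξ`; restricted to a generic line, which meets `k + 1` of them in
distinct points, it has too many roots, so it vanishes. Summing the exponential series gives
`∫ f y * exp (y ⬝ᵥ η) = 0` for all `η`. The exponentials span a point-separating algebra, so
by Stone–Weierstrass `∫ f ^ 2 = 0`.
-/

open MeasureTheory Polynomial

theorem exists_forall_dotProduct_ne_zero {ι : Type*} [Finite ι] {d : ℕ}
    (a : ι → Fin d → ℝ) (ha : ∀ i, a i ≠ 0) : ∃ v : Fin d → ℝ, ∀ i, v ⬝ᵥ a i ≠ 0 := by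
  by_contra! hcover
  obtain ⟨i, hi⟩ := Subspace.exists_eq_top_of_iUnion_eq_univ
    (p := fun i => LinearMap.ker (dotProductBilin ℝ ℝ |>.flip (a i)))
    (Set.eq_univ_of_forall fun v => Set.mem_iUnion.mpr (hcover v))
  have : a i ⬝ᵥ a i = 0 := by simpa using LinearMap.congr_fun (LinearMap.ker_eq_top.mp hi) (a i)
  exact ha i (dotProduct_self_eq_zero.mp this)

theorem Set.Infinite.exists_pairwise_linearIndependent {K V : Type*} [Field K] [AddCommGroup V]
    [Module K V] {Ξ : Set V} (hΞ : Ξ.Infinite) (hzero : 0 ∉ Ξ)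
    (hline : ∀ ξ ∈ Ξ, {a : K | a • ξ ∈ Ξ}.Finite) :
    ∃ ξ : ℕ → V, (∀ n, ξ n ∈ Ξ) ∧ Pairwise fun m n => LinearIndependent K ![ξ m, ξ n] := by
  have hlines : ((fun ξ => K ∙ ξ) '' Ξ).Infinite := by
    intro hfin
    refine hΞ ((hfin.biUnion (t := fun ℓ => Ξ ∩ ℓ) ?_).subset fun ξ hξ => ?_)
    · rintro _ ⟨ξ₀, hξ₀, rfl⟩
      refine ((hline ξ₀ hξ₀).image (· • ξ₀)).subset ?_
      rintro _ ⟨hξ, hξ_mem⟩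
      obtain ⟨a, rfl⟩ := Submodule.mem_span_singleton.mp hξ_mem
      exact ⟨a, hξ, rfl⟩
    · exact Set.mem_biUnion (Set.mem_image_of_mem _ hξ) ⟨hξ, Submodule.mem_span_singleton_self ξ⟩
  have hrep : ∀ n, ∃ ξ ∈ Ξ, K ∙ ξ = hlines.natEmbedding _ n := fun n => (hlines.natEmbedding _ n).2
  choose ξ hξΞ hξ using hrep
  refine ⟨ξ, hξΞ, fun m n hmn => ?_⟩
  have hne : ∀ n, ξ n ≠ 0 := fun n h => hzero (h ▸ hξΞ n)
  refine (LinearIndependent.pair_iff' (hne m)).mpr fun a ha => hmn ?_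
  have ha0 : a ≠ 0 := by rintro rfl; exact hne n (by simpa using ha.symm)
  refine (hlines.natEmbedding _).injective (Subtype.ext ?_)
  rw [← hξ, ← hξ, ← ha, Submodule.span_singleton_smul_eq (IsUnit.mk0 a ha0)]

theorem integral_comp_add_smul_eq_zero_of_forall_dotProduct_eq_zero {E : Type*}
    [NormedAddCommGroup E] [NormedSpace ℝ E] {d : ℕ} {f : (Fin d → ℝ) → E} {ξ : Fin d → ℝ}
    (hξ : ξ ≠ 0) (hf : ∀ x, x ⬝ᵥ ξ = 0 → ∫ τ : ℝ, f (x + τ • ξ) = 0) (x : Fin d → ℝ) :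
    ∫ τ : ℝ, f (x + τ • ξ) = 0 := by
  have hξξ : ξ ⬝ᵥ ξ ≠ 0 := fun h => hξ (dotProduct_self_eq_zero.mp h)
  set s := x ⬝ᵥ ξ / ξ ⬝ᵥ ξ
  have hp : (x - s • ξ) ⬝ᵥ ξ = 0 := by
    simp only [sub_dotProduct, smul_dotProduct, smul_eq_mul, s, div_mul_cancel₀ _ hξξ, sub_self]
  calc ∫ τ : ℝ, f (x + τ • ξ) = ∫ τ : ℝ, f (x - s • ξ + (τ + s) • ξ) := by
        simp only [add_smul, sub_add_add_cancel]
    _ = 0 := (integral_add_right_eq_self (fun τ => f (x - s • ξ + τ • ξ)) s).trans (hf _ hp)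

theorem integral_eq_zero_of_integral_comp_add_smul_eq_zero_of_apply_eq_one {E : Type*}
    [NormedAddCommGroup E] [NormedSpace ℝ E] {m : ℕ} {h : (Fin (m + 1) → ℝ) → E}
    (hh : Integrable h) {w : Fin (m + 1) → ℝ} {j : Fin (m + 1)} (hwj : w j = 1)
    (hline : ∀ x, ∫ τ : ℝ, h (x + τ • w) = 0) : ∫ x, h x = 0 := by
  let e := MeasurableEquiv.piFinSuccAbove (fun _ => ℝ) j
  have he : MeasurePreserving e.symm (volume.prod volume) volume := by
    rw [← Measure.volume_eq_prod]
    exact (volume_preserving_piFinSuccAbove _ j).symm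
  let w' : Fin m → ℝ := fun i => w (j.succAbove i)
  have hS : MeasurePreserving (fun p : ℝ × (Fin m → ℝ) => (p.1, p.2 + p.1 • w'))
      (volume.prod volume) (volume.prod volume) :=
    (MeasurePreserving.id volume).skew_product (by fun_prop)
      (ae_of_all _ fun t => map_add_right_eq_self volume (t • w'))
  have hG : Integrable (h ∘ e.symm) (volume.prod volume) := he.integrable_comp_of_integrable hh
  have hshear : ∀ t r, e.symm (t, r + t • w') = e.symm (0, r) + t • w := by
    intro t r
    ext i
    induction i using j.succAboveCases <;> simp [e, hwj, w']
  -- Fubini in the coordinates `(x j, rest)`, after shearing `rest` by `x j • w'`, turns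
  -- `∫ h` into an integral of line integrals along `w`.
  calc ∫ x, h x = ∫ p, h (e.symm p) ∂(volume.prod volume) := (he.integral_comp' h).symm
    _ = ∫ t : ℝ, ∫ r : Fin m → ℝ, h (e.symm (t, r)) := integral_prod _ hG
    _ = ∫ t : ℝ, ∫ r : Fin m → ℝ, h (e.symm (t, r + t • w')) := by
      refine integral_congr_ae (ae_of_all _ fun t => ?_)
      exact (integral_add_right_eq_self (fun r => h (e.symm (t, r))) (t • w')).symm
    _ = ∫ r : Fin m → ℝ, ∫ t : ℝ, h (e.symm (0, r) + t • w) := by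
      simp_rw [← hshear]
      exact integral_integral_swap (hS.integrable_comp_of_integrable hG)
    _ = 0 := by simp [hline]

theorem integral_eq_zero_of_integral_comp_add_smul_eq_zero {E : Type*} [NormedAddCommGroup E]
    [NormedSpace ℝ E] {n : ℕ} {h : (Fin n → ℝ) → E} (hh : Integrable h) {ξ : Fin n → ℝ}
    (hξ : ξ ≠ 0) (hline : ∀ x, ∫ τ : ℝ, h (x + τ • ξ) = 0) : ∫ x, h x = 0 := by
  obtain ⟨j, hj⟩ := Function.ne_iff.mp hξ
  cases n with
  | zero => exact j.elim0
  | succ m =>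
    refine integral_eq_zero_of_integral_comp_add_smul_eq_zero_of_apply_eq_one hh
      (w := (ξ j)⁻¹ • ξ) (j := j) (inv_mul_cancel₀ hj) fun x => ?_
    calc ∫ τ : ℝ, h (x + τ • (ξ j)⁻¹ • ξ) = ∫ τ : ℝ, h (x + (τ * (ξ j)⁻¹) • ξ) := by
          simp only [smul_smul]
      _ = 0 := by
        rw [Measure.integral_comp_mul_right (fun τ => h (x + τ • ξ)), hline, smul_zero]

theorem integral_mul_eq_zero_of_comp_add_smul_eq {d : ℕ} {f g : (Fin d → ℝ) → ℝ}
    (hf : Continuous f) (hfs : HasCompactSupport f) (hg : Continuous g) {ξ : Fin d → ℝ}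
    (hξ : ξ ≠ 0) (hfξ : ∀ x, ∫ τ : ℝ, f (x + τ • ξ) = 0)
    (hgξ : ∀ x (τ : ℝ), g (x + τ • ξ) = g x) :
    ∫ x, f x * g x = 0 :=
  integral_eq_zero_of_integral_comp_add_smul_eq_zero
    ((hf.mul hg).integrable_of_hasCompactSupport hfs.mul_right) hξ fun x => by
      simp_rw [hgξ, integral_mul_const, hfξ, zero_mul]

theorem exists_polynomial_eval_eq_integral_mul_dotProduct_pow {d : ℕ} {f : (Fin d → ℝ) → ℝ}
    (hf : Continuous f) (hfs : HasCompactSupport f) (k : ℕ) (η v : Fin d → ℝ) :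
    ∃ p : ℝ[X], p.natDegree ≤ k ∧ ∀ s : ℝ, p.eval s = ∫ y, f y * (y ⬝ᵥ (η + s • v)) ^ k := by
  let c : ℕ → ℝ := fun i => k.choose i * ∫ y, f y * ((y ⬝ᵥ v) ^ i * (y ⬝ᵥ η) ^ (k - i))
  refine ⟨∑ i ∈ Finset.range (k + 1), C (c i) * X ^ i, ?_, fun s => ?_⟩
  · refine natDegree_sum_le_of_forall_le _ _ fun i hi => (natDegree_C_mul_X_pow_le _ _).trans ?_
    exact Nat.lt_succ_iff.mp (Finset.mem_range.mp hi)
  have hint : ∀ i, Integrable fun y => f y * ((y ⬝ᵥ v) ^ i * (y ⬝ᵥ η) ^ (k - i)) := fun i =>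
    (hf.mul (by fun_prop)).integrable_of_hasCompactSupport hfs.mul_right
  have hexpand : ∀ y, f y * (y ⬝ᵥ (η + s • v)) ^ k = ∑ i ∈ Finset.range (k + 1),
      s ^ i * k.choose i * (f y * ((y ⬝ᵥ v) ^ i * (y ⬝ᵥ η) ^ (k - i))) := by
    intro y
    rw [dotProduct_add, dotProduct_smul, smul_eq_mul, add_comm, add_pow, Finset.mul_sum]
    refine Finset.sum_congr rfl fun i _ => by ring
  simp_rw [hexpand, eval_finsetSum, eval_C_mul, eval_X_pow]
  rw [integral_finsetSum _ fun i _ => (hint i).const_mul _]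
  simp_rw [integral_const_mul, c]
  exact Finset.sum_congr rfl fun i _ => by ring

theorem eq_zero_of_vanishing_on_hyperplanes {d k : ℕ} {P : (Fin d → ℝ) → ℝ}
    (hP : ∀ η v, ∃ p : ℝ[X], p.natDegree ≤ k ∧ ∀ s : ℝ, p.eval s = P (η + s • v))
    {ξ : Fin (k + 1) → Fin d → ℝ} (hξ : Pairwise fun i j => LinearIndependent ℝ ![ξ i, ξ j])
    (hPξ : ∀ i η, η ⬝ᵥ ξ i = 0 → P η = 0) : P = 0 := by
  funext η
  by_cases hη : ∃ i, η ⬝ᵥ ξ i = 0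
  · obtain ⟨i, hi⟩ := hη
    exact hPξ i η hi
  push Not at hη
  let c i := η ⬝ᵥ ξ i
  -- the line `η + s • v` meets the hyperplanes `(ξ i)ᗮ` at distinct points unless `v` is
  -- orthogonal to one of the following vectors
  let a : Fin (k + 1) ⊕ {p : Fin (k + 1) × Fin (k + 1) // p.1 ≠ p.2} → Fin d → ℝ :=
    Sum.elim ξ fun p => c p.1.1 • ξ p.1.2 - c p.1.2 • ξ p.1.1
  have ha : ∀ i, a i ≠ 0 := by
    rintro (i | ⟨⟨i, j⟩, hij⟩) ha
    · exact hη i (by simp [a] at ha; simp [ha])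
    · have := (LinearIndependent.pair_iff.mp (hξ hij) (-c j) (c i) (by
        simp only [a, Sum.elim_inr] at ha; rw [← ha, neg_smul]; abel)).2
      exact hη i this
  obtain ⟨v, hv⟩ := exists_forall_dotProduct_ne_zero a ha
  obtain ⟨p, hpdeg, hpP⟩ := hP η v
  let t i := -c i / (v ⬝ᵥ ξ i)
  have hroot : ∀ i, p.eval (t i) = 0 := by
    intro i
    refine (hpP _).trans (hPξ i _ ?_)
    have := hv (.inl i)
    simp only [a, Sum.elim_inl] at this
    simp only [add_dotProduct, smul_dotProduct, smul_eq_mul, t, c]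
    field_simp
    ring
  have ht : Function.Injective t := by
    intro i j hij
    by_contra hne
    have hi := hv (.inl i)
    have hj := hv (.inl j)
    refine hv (.inr ⟨(i, j), hne⟩) ?_
    simp only [a, Sum.elim_inl, Sum.elim_inr, dotProduct_sub, dotProduct_smul, smul_eq_mul]
      at hi hj ⊢
    simp only [t, div_eq_div_iff hi hj] at hij
    linear_combination -hij
  have hp0 : p = 0 := p.eq_zero_of_natDegree_lt_card_of_eval_eq_zero ht hroot
    (by simpa using Nat.lt_succ_of_le hpdeg)
  simpa [hp0] using (hpP 0).symm

theorem integral_mul_exp_eq_zero_of_forall_integral_mul_pow_eq_zero {X : Type*}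
    [TopologicalSpace X] [MeasurableSpace X] [OpensMeasurableSpace X] {μ : Measure X}
    [IsFiniteMeasureOnCompacts μ] {f a : X → ℝ} (hf : Continuous f) (hfs : HasCompactSupport f)
    (ha : Continuous a) (hmom : ∀ k : ℕ, ∫ x, f x * a x ^ k ∂μ = 0) :
    ∫ x, f x * Real.exp (a x) ∂μ = 0 := by
  have hexp : ∀ r : ℝ, HasSum (fun k => r ^ k / k.factorial) (Real.exp r) := fun r =>
    Real.exp_eq_exp_ℝ ▸ NormedSpace.expSeries_div_hasSum_exp r
  have hbound : ∀ (k : ℕ) x,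
      ‖f x * (a x ^ k / k.factorial)‖ ≤ |f x| * (|a x| ^ k / k.factorial) := by
    intro k x
    rw [Real.norm_eq_abs, abs_mul, abs_div, abs_pow, Nat.abs_cast]
  have hint : Integrable (fun x => ∑' k : ℕ, |f x| * (|a x| ^ k / k.factorial)) μ := by
    simp_rw [((hexp _).mul_left _).tsum_eq]
    exact (hf.abs.mul (by fun_prop)).integrable_of_hasCompactSupport hfs.abs.mul_right
  have hsum : HasSum (fun k : ℕ => ∫ x, f x * (a x ^ k / k.factorial) ∂μ)
      (∫ x, f x * Real.exp (a x) ∂μ) :=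
    hasSum_integral_of_dominated_convergence (fun k x => |f x| * (|a x| ^ k / k.factorial))
      (fun k => (hf.mul ((ha.pow k).div_const _)).aestronglyMeasurable)
      (fun k => ae_of_all _ (hbound k))
      (ae_of_all _ fun x => ((hexp |a x|).mul_left |f x|).summable) hint
      (ae_of_all _ fun x => (hexp (a x)).mul_left (f x))
  refine hsum.unique ?_
  convert hasSum_zero with k
  simp_rw [mul_div_assoc', integral_div, hmom, zero_div]

theorem eq_zero_of_forall_mem_subalgebra_integral_mul_eq_zero {X : Type*} [TopologicalSpace X]
    [MeasurableSpace X] [OpensMeasurableSpace X] {μ : Measure X} [IsFiniteMeasureOnCompacts μ]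
    [μ.IsOpenPosMeasure] {f : X → ℝ} (hf : Continuous f) (hfs : HasCompactSupport f)
    {A : Subalgebra ℝ C(X, ℝ)} (hA : A.SeparatesPoints) (hAf : ∀ g ∈ A, ∫ x, f x * g x ∂μ = 0) :
    f = 0 := by
  let K := tsupport f
  have : CompactSpace K := isCompact_iff_compactSpace.mp hfs
  let restrictK :=
    ContinuousMap.compRightAlgHom ℝ ℝ (⟨Subtype.val, continuous_subtype_val⟩ : C(K, X))
  have hAK : (A.map restrictK).SeparatesPoints := by
    intro x y hxy
    obtain ⟨_, ⟨g, hg, rfl⟩, hgxy⟩ := hA (Subtype.coe_injective.ne hxy)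
    exact ⟨_, ⟨restrictK g, ⟨g, hg, rfl⟩, rfl⟩, hgxy⟩
  have hint : ∀ g : X → ℝ, Continuous g → Integrable (fun x => f x * g x) μ := fun g hg =>
    (hf.mul hg).integrable_of_hasCompactSupport hfs.mul_right
  have hsmall : ∀ ε > 0, ∫ x, f x * f x ∂μ ≤ ε * ∫ x, |f x| ∂μ := by
    intro ε hε
    obtain ⟨⟨_, g, hg, rfl⟩, hgf⟩ :=
      ContinuousMap.exists_mem_subalgebra_near_continuous_of_separatesPoints _ hAK
        (fun x : K => f x) (hf.comp continuous_subtype_val) ε hε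
    have hle : ∀ x, f x * (f x - g x) ≤ ε * |f x| := by
      intro x
      by_cases hx : x ∈ K
      · have hx' := hgf ⟨x, hx⟩
        rw [Real.norm_eq_abs, abs_sub_comm] at hx'
        calc f x * (f x - g x) ≤ |f x| * |f x - g x| := (le_abs_self _).trans (abs_mul _ _).le
          _ ≤ ε * |f x| := by rw [mul_comm]; exact mul_le_mul_of_nonneg_right hx'.le (abs_nonneg _)
      · simp [image_eq_zero_of_notMem_tsupport hx]
    calc ∫ x, f x * f x ∂μ = ∫ x, f x * (f x - g x) ∂μ := by
          simp_rw [mul_sub]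
          rw [integral_sub (hint f hf) (hint g g.continuous), hAf g hg, sub_zero]
      _ ≤ ∫ x, ε * |f x| ∂μ := integral_mono (hint _ (hf.sub g.continuous))
          ((hf.integrable_of_hasCompactSupport hfs).abs.const_mul _) hle
      _ = ε * ∫ x, |f x| ∂μ := integral_const_mul _ _
  have hC : 0 ≤ ∫ x, |f x| ∂μ := integral_nonneg fun x => abs_nonneg _
  have hsq : ∫ x, f x * f x ∂μ = 0 := by
    refine le_antisymm (le_of_forall_pos_le_add fun ε hε => ?_)
      (integral_nonneg fun x => mul_self_nonneg _)
    calc ∫ x, f x * f x ∂μ ≤ ε / (∫ x, |f x| ∂μ + 1) * ∫ x, |f x| ∂μ := hsmall _ (by positivity)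
      _ ≤ 0 + ε := by
        rw [zero_add, div_mul_eq_mul_div, div_le_iff₀ (by positivity)]
        nlinarith
  have hae : (fun x => f x * f x) =ᵐ[μ] 0 :=
    (integral_eq_zero_iff_of_nonneg (fun x => mul_self_nonneg _) (hint f hf)).mp hsq
  funext x
  exact mul_self_eq_zero.mp (congrFun ((hf.mul hf).ae_eq_iff_eq μ continuous_const |>.mp hae) x)

theorem eq_zero_of_forall_integral_mul_exp_dotProduct_eq_zero {d : ℕ} {f : (Fin d → ℝ) → ℝ}
    (hf : Continuous f) (hfs : HasCompactSupport f)
    (hexp : ∀ η, ∫ y, f y * Real.exp (y ⬝ᵥ η) = 0) : f = 0 := by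
  let expDot : Submonoid C(Fin d → ℝ, ℝ) :=
    { carrier := Set.range fun η => ⟨fun y => Real.exp (y ⬝ᵥ η), by fun_prop⟩
      mul_mem' := by
        rintro _ _ ⟨η, rfl⟩ ⟨η', rfl⟩
        exact ⟨η + η', by ext y; simp [dotProduct_add, Real.exp_add]⟩
      one_mem' := ⟨0, by ext; simp⟩ }
  refine eq_zero_of_forall_mem_subalgebra_integral_mul_eq_zero (μ := volume) hf hfs
    (A := Algebra.adjoin ℝ expDot) ?_ fun g hg => ?_
  · intro x y hxy
    refine ⟨_, ⟨_, Algebra.subset_adjoin ⟨x - y, rfl⟩, rfl⟩, fun heq => hxy ?_⟩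
    have : (x - y) ⬝ᵥ (x - y) = 0 := by
      rw [sub_dotProduct, Real.exp_injective heq, sub_self]
    exact sub_eq_zero.mp (dotProduct_self_eq_zero.mp this)
  · have hspan := Algebra.adjoin_eq_span ℝ (expDot : Set C(Fin d → ℝ, ℝ))
    rw [Submonoid.closure_eq] at hspan
    replace hg : g ∈ Submodule.span ℝ (expDot : Set C(Fin d → ℝ, ℝ)) := hspan ▸ hg
    induction hg using Submodule.span_induction with
    | mem g hg => obtain ⟨η, rfl⟩ := hg; exact hexp η
    | zero => simp
    | add g₁ g₂ _ _ h₁ h₂ =>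
      simp only [ContinuousMap.add_apply, mul_add]
      rw [integral_add, h₁, h₂, add_zero] <;>
        exact (hf.mul (ContinuousMap.continuous _)).integrable_of_hasCompactSupport hfs.mul_right
    | smul c g _ h => simp [mul_left_comm _ c, integral_const_mul, h]

theorem stmt9 {d : ℕ} (f : (Fin d → ℝ) → ℝ) (hf_cont : Continuous f)
    (hf_supp : HasCompactSupport f)
    (Ξ : Set (Fin d → ℝ)) (hΞ_inf : Ξ.Infinite)
    (hΞ_sphere : ∀ ξ ∈ Ξ, ∑ i, (ξ i) ^ 2 = 1)
    (hvanish : ∀ ξ ∈ Ξ, ∀ x : Fin d → ℝ, (∑ i, x i * ξ i) = 0 →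
      (∫ τ : ℝ, f (x + τ • ξ)) = 0) :
    f = 0 := by
  have hunit : ∀ ξ ∈ Ξ, ξ ⬝ᵥ ξ = 1 := by simpa [dotProduct, sq] using hΞ_sphere
  have hzero : (0 : Fin d → ℝ) ∉ Ξ := fun h => by simpa using hunit 0 h
  have hline : ∀ ξ ∈ Ξ, {a : ℝ | a • ξ ∈ Ξ}.Finite := fun ξ hξ =>
    (Set.toFinite {1, -1}).subset fun a ha => by
      have := hunit _ ha
      rw [smul_dotProduct, dotProduct_smul, hunit ξ hξ, smul_eq_mul, smul_eq_mul, mul_one] at this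
      exact mul_self_eq_one_iff.mp this
  obtain ⟨ξs, hξsΞ, hξs⟩ := hΞ_inf.exists_pairwise_linearIndependent hzero hline
  have hann : ∀ ξ ∈ Ξ, ∀ η, η ⬝ᵥ ξ = 0 → ∀ k : ℕ, ∫ y, f y * (y ⬝ᵥ η) ^ k = 0 := by
    intro ξ hξ η hη k
    have hξ0 : ξ ≠ 0 := ne_of_mem_of_not_mem hξ hzero
    refine integral_mul_eq_zero_of_comp_add_smul_eq hf_cont hf_supp (by fun_prop) hξ0
      (integral_comp_add_smul_eq_zero_of_forall_dotProduct_eq_zero hξ0 (hvanish ξ hξ))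
      fun y τ => ?_
    rw [add_dotProduct, smul_dotProduct, dotProduct_comm ξ η, hη, smul_zero, add_zero]
  have hmom : ∀ k η, ∫ y, f y * (y ⬝ᵥ η) ^ k = 0 := fun k => congrFun <|
    eq_zero_of_vanishing_on_hyperplanes
      (exists_polynomial_eval_eq_integral_mul_dotProduct_pow hf_cont hf_supp k)
      (ξ := fun i : Fin (k + 1) => ξs i) (fun i j hij => hξs (Fin.val_injective.ne hij))
      fun i η hη => hann _ (hξsΞ i) η hη k
  exact eq_zero_of_forall_integral_mul_exp_dotProduct_eq_zero hf_cont hf_supp fun η =>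
    integral_mul_exp_eq_zero_of_forall_integral_mul_pow_eq_zero hf_cont hf_supp (by fun_prop)
      fun k => hmom k η
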